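/- arXiv:2404.10651 — 8 statements merged into one kernel-verified Lean document; each statement's English description precedes it below -/
import Mathlib

section
/- Every GUNC ring is abelian, i.e., every idempotent of a GUNC ring is central. -/
def IsUniquelyNilClean {R : Type*} [Ring R] (a : R) : Prop :=
  ∃! e : R, IsIdempotentElem e ∧ IsNilpotent (a - e)

/-- A ring is GUNC if every non-invertible element is uniquely nil-clean. -/
def IsGUNC (R : Type*) [Ring R] : Prop :=
  ∀ a : R, ¬ IsUnit a → IsUniquelyNilClean a

theorem gunc_abelian {R : Type*} [Ring R] (h : IsGUNC R) :
    ∀ e : R, IsIdempotentElem e → ∀ x : R, e * x = x * e := by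
  intro e he x
  by_cases hu : IsUnit e
  · have h1 : e = 1 := by
      have := he.eq
      have h2 : e * e = e * 1 := by rw [mul_one, this]
      exact hu.mul_left_cancel h2
    simp [h1]
  · obtain ⟨g, _, huniq⟩ := h e hu
    have heg : e = g := huniq e ⟨he, by simp⟩
    -- u = e x (1-e)
    set u := e * x - e * x * e with hudef
    have hue : u * e = 0 := by
      simp only [hudef, sub_mul, mul_assoc, he.eq, sub_self]
    have heu : e * u = u := by
      simp only [hudef, mul_sub, ← mul_assoc, he.eq]
    have huu : u * u = 0 := by
      have h3 : u = e * (x - x * e) := by rw [hudef]; noncomm_ring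
      calc u * u = u * e * (x - x * e) := by rw [mul_assoc, ← h3]
      _ = 0 := by rw [hue, zero_mul]
    have hfidem : IsIdempotentElem (e + u) := by
      unfold IsIdempotentElem
      rw [add_mul, mul_add, mul_add, he.eq, heu, hue, huu, add_zero, add_zero]
    have hfnil : IsNilpotent (e - (e + u)) := by
      refine ⟨2, ?_⟩
      have : e - (e + u) = -u := by abel
      rw [this, pow_two, neg_mul_neg, huu]
    have hfg : e + u = g := huniq (e + u) ⟨hfidem, hfnil⟩
    have huz : u = 0 := add_eq_left.mp (hfg.trans heg.symm)
    -- v = (1-e) x e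
    set v := x * e - e * x * e with hvdef
    have hev : e * v = 0 := by
      simp only [hvdef, mul_sub, ← mul_assoc, he.eq, sub_self]
    have hve : v * e = v := by
      simp only [hvdef, sub_mul, mul_assoc, he.eq]
    have hvv : v * v = 0 := by
      have h3 : v = (x - e * x) * e := by rw [hvdef]; noncomm_ring
      calc v * v = (x - e * x) * (e * v) := by rw [← mul_assoc, ← h3]
      _ = 0 := by rw [hev, mul_zero]
    have hgidem : IsIdempotentElem (e + v) := by
      unfold IsIdempotentElem
      rw [add_mul, mul_add, mul_add, he.eq, hev, hve, hvv, add_zero, add_zero]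
    have hgnil : IsNilpotent (e - (e + v)) := by
      refine ⟨2, ?_⟩
      have : e - (e + v) = -v := by abel
      rw [this, pow_two, neg_mul_neg, hvv]
    have hgg : e + v = g := huniq (e + v) ⟨hgidem, hgnil⟩
    have hvz : v = 0 := add_eq_left.mp (hgg.trans heg.symm)
    have h4 : e * x = e * x * e := sub_eq_zero.mp huz
    have h5 : x * e = e * x * e := sub_eq_zero.mp hvz
    rw [h4, h5]
end

section
/- If a finite direct product ∏_{i=1}^n R_i of rings is a GUNC ring, then each factor R_i is a GUNC ring. -/
/-! A non-unit `a` of `R i` gives the non-unit `Pi.single i a` of the product. Its nil-clean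
decomposition projects to one of `a`, and every nil-clean decomposition of `a` extends by zero
to one of `Pi.single i a`, so uniqueness in the product forces uniqueness in `R i`. -/

section

variable {ι : Type*} [DecidableEq ι] {R : ι → Type*} [∀ i, Ring (R i)] {i : ι}

namespace Pi

theorem not_isUnit_single {a : R i} (ha : ¬IsUnit a) : ¬IsUnit (Pi.single i a : ∀ j, R j) :=
  fun hu ↦ ha (by simpa using hu.apply i)

theorem isIdempotentElem_single {e : R i} (he : IsIdempotentElem e) :
    IsIdempotentElem (Pi.single i e : ∀ j, R j) :=
  he.map (MulHom.single (α := R) i)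

theorem isNilpotent_single {x : R i} (hx : IsNilpotent x) :
    IsNilpotent (Pi.single i x : ∀ j, R j) := by
  obtain ⟨k, hk⟩ := hx
  refine ⟨k + 1, funext fun j ↦ ?_⟩
  rcases eq_or_ne j i with rfl | hji
  · simp [pow_succ', hk]
  · simp [Pi.single_eq_of_ne hji]

end Pi

theorem IsUniquelyNilClean.of_single {a : R i}
    (h : IsUniquelyNilClean (Pi.single i a : ∀ j, R j)) : IsUniquelyNilClean a := by
  obtain ⟨E, ⟨hE_idem, hE_nil⟩, hE_unique⟩ := h
  refine ⟨E i, ⟨hE_idem.map (Pi.evalRingHom R i), ?_⟩, fun e ⟨he_idem, he_nil⟩ ↦ ?_⟩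
  · simpa using hE_nil.map (Pi.evalRingHom R i)
  · have hE_eq : E = Pi.single i e := (hE_unique (Pi.single i e)
      ⟨Pi.isIdempotentElem_single he_idem, by
        simpa [← Pi.single_sub] using Pi.isNilpotent_single he_nil⟩).symm
    simp [hE_eq]

end

theorem gunc_of_pi_gunc {n : ℕ} {R : Fin n → Type*} [∀ i, Ring (R i)]
    (h : IsGUNC (∀ i, R i)) (i : Fin n) : IsGUNC (R i) :=
  fun _ ha ↦ (h _ (Pi.not_isUnit_single ha)).of_single
end

section
/- If R is a local ring whose Jacobson radical J(R) is nil, then R is a GUNC ring. -/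
/-- Idempotents in a local ring are trivial. -/
lemma idem_eq_zero_or_one {R : Type*} [Ring R] [IsLocalRing R] {e : R}
    (he : IsIdempotentElem e) : e = 0 ∨ e = 1 := by
  rcases IsLocalRing.isUnit_or_isUnit_of_add_one (a := e) (b := 1 - e)
      (by rw [add_sub_cancel]) with hu | hu
  · right
    rcases hu with ⟨u, hu⟩
    have h1 : (↑u⁻¹ : R) * (e * e) = (↑u⁻¹ : R) * e := by rw [he]
    rw [← hu, ← mul_assoc, u.inv_mul, one_mul] at h1
    rw [← hu]; exact h1
  · left
    rcases hu with ⟨u, hu⟩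
    have h2 : (1 - e) * e = 0 := by rw [sub_mul, one_mul, he.eq, sub_self]
    have h3 : (↑u⁻¹ : R) * ((1 - e) * e) = 0 := by rw [h2, mul_zero]
    rw [← hu, ← mul_assoc, u.inv_mul, one_mul] at h3
    exact h3

/-- In a local ring, an element with a left inverse is a unit. -/
lemma isUnit_of_left_inv {R : Type*} [Ring R] [IsLocalRing R] {a b : R}
    (h : b * a = 1) : IsUnit a := by
  have hab : IsIdempotentElem (a * b) := by
    show a * b * (a * b) = a * b
    rw [mul_assoc, ← mul_assoc b a, h, one_mul]
  rcases idem_eq_zero_or_one hab with h0 | h1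
  · have ha0 : a = 0 := by
      have h4 : a * (b * a) = a := by rw [h, mul_one]
      rw [← mul_assoc, h0, zero_mul] at h4
      exact h4.symm
    have h10 : (1 : R) = 0 := by rw [← h, ha0, mul_zero]
    exact ⟨⟨a, a, by rw [ha0, mul_zero, ← h10], by rw [ha0, mul_zero, ← h10]⟩, rfl⟩
  · exact ⟨⟨a, b, h1, h⟩, rfl⟩

theorem gunc_of_local_nil_jacobson {R : Type*} [Ring R] [IsLocalRing R]
    (hJ : ∀ a ∈ (⊥ : TwoSidedIdeal R).jacobson, IsNilpotent a) :
    IsGUNC R := by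
  intro a ha
  have hnil : IsNilpotent a := by
    apply hJ
    rw [TwoSidedIdeal.mem_jacobson_iff]
    intro y
    have hya : ¬ IsUnit (-(y * a)) := by
      intro h
      have h' : IsUnit (y * a) := neg_neg (y * a) ▸ h.neg
      rcases h' with ⟨u, hu⟩
      exact ha (isUnit_of_left_inv (b := (↑u⁻¹ : R) * y)
        (by rw [mul_assoc, ← hu, u.inv_mul]))
    have hunit : IsUnit (y * a + 1) := by
      rcases IsLocalRing.isUnit_or_isUnit_of_add_one (a := -(y * a)) (b := y * a + 1)
        (by rw [neg_add_cancel_left]) with h | h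
      · exact absurd h hya
      · exact h
    rcases hunit with ⟨u, hu⟩
    refine ⟨(↑u⁻¹ : R), ?_⟩
    have h1 : (↑u⁻¹ : R) * (y * a + 1) = 1 := by rw [← hu, u.inv_mul]
    rw [mul_add, mul_one, ← mul_assoc] at h1
    rw [TwoSidedIdeal.mem_bot]
    rw [h1, sub_self]
  refine ⟨0, ⟨by simp [IsIdempotentElem], by simpa using hnil⟩, ?_⟩
  rintro e ⟨he, hae⟩
  rcases idem_eq_zero_or_one he with h | h
  · exact h
  · exfalso
    apply ha
    subst h
    have := hae.isUnit_add_right_of_commute (u := 1) (by simp)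
    simpa using this
end

section
/- A ring R is GUNC if and only if R is either a local ring with nil Jacobson radical or a uniquely nil-clean (UNC) ring. -/
/-- A ring is UNC if every element is uniquely nil-clean. -/
def IsUNC (R : Type*) [Ring R] : Prop :=
  ∀ a : R, IsUniquelyNilClean a

/-! In a GUNC ring every idempotent `e` is central: `e` and `e + e r (1 - e)` are idempotents
differing by a square-zero element, so uniqueness forces `e r (1 - e) = 0`. Once idempotents are
central, nil-clean decompositions are unique, and a nontrivial idempotent `e` splits a unit `a`
into the non-units `e a` and `(1 - e) a`, whose decompositions reassemble into one of `a`; so the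
ring is UNC. If the only idempotents are `0` and `1`, GUNC says exactly that every non-unit is
nilpotent, which amounts to being local with nil Jacobson radical. -/

section NilClean

variable {R : Type*} [Ring R]

def IsNilClean (a : R) : Prop :=
  ∃ e : R, IsIdempotentElem e ∧ IsNilpotent (a - e)

namespace IsIdempotentElem

variable {e : R}

theorem not_isUnit_mul (he : IsIdempotentElem e) (he1 : e ≠ 1) (a : R) : ¬ IsUnit (e * a) := by
  rintro ⟨u, hu⟩
  have hright : e * (a * ↑u⁻¹) = 1 := by rw [← mul_assoc, ← hu, u.mul_inv]
  refine he1 (sub_eq_zero.mp ?_).symm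
  calc 1 - e = (1 - e) * e * (a * ↑u⁻¹) := by rw [mul_assoc, hright, mul_one]
    _ = 0 := by rw [he.one_sub_mul_self, zero_mul]

theorem mul_mul_one_sub_sq (he : IsIdempotentElem e) (r : R) : (e * r * (1 - e)) ^ 2 = 0 := by
  rw [sq, show e * r * (1 - e) * (e * r * (1 - e)) = e * r * ((1 - e) * e) * r * (1 - e) by
    noncomm_ring, he.one_sub_mul_self, mul_zero, zero_mul, zero_mul]

theorem add_mul_mul_one_sub (he : IsIdempotentElem e) (r : R) :
    IsIdempotentElem (e + e * r * (1 - e)) := by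
  have hex : e * (e * r * (1 - e)) = e * r * (1 - e) := by rw [← mul_assoc, ← mul_assoc, he.eq]
  have hxe : e * r * (1 - e) * e = 0 := by rw [mul_assoc, he.one_sub_mul_self, mul_zero]
  rw [IsIdempotentElem, mul_add, add_mul, add_mul, he.eq, hex, hxe, ← sq,
    he.mul_mul_one_sub_sq, add_zero, add_zero]

section Central

variable (he : IsIdempotentElem e) (hc : ∀ r, Commute e r)
include he hc

theorem corner_sum_mul (x y x' y' : R) :
    (e * x + (1 - e) * y) * (e * x' + (1 - e) * y') = e * (x * x') + (1 - e) * (y * y') := by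
  have hc' : ∀ r, Commute (1 - e) r := fun r => (Commute.one_left r).sub_left (hc r)
  have hmul : ∀ p q u v : R, (∀ r, Commute q r) → p * u * (q * v) = p * q * (u * v) := by
    intro p q u v hq
    rw [mul_assoc, ← mul_assoc u, ← (hq u).eq]
    simp only [mul_assoc]
  rw [mul_add, add_mul, add_mul, hmul _ _ _ _ hc, hmul _ _ _ _ hc, hmul _ _ _ _ hc',
    hmul _ _ _ _ hc', he.eq, he.mul_one_sub_self, he.one_sub_mul_self, he.one_sub.eq,
    zero_mul, zero_mul, add_zero, zero_add]

theorem corner_sum_pow (x y : R) (n : ℕ) :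
    (e * x + (1 - e) * y) ^ n = e * x ^ n + (1 - e) * y ^ n := by
  induction n with
  | zero => simp
  | succ n ih => rw [pow_succ, ih, corner_sum_mul he hc, ← pow_succ, ← pow_succ]

theorem isNilClean_of_isNilClean_mul {a : R} (h₁ : IsNilClean (e * a))
    (h₂ : IsNilClean ((1 - e) * a)) : IsNilClean a := by
  obtain ⟨f, hf, m, hm⟩ := h₁
  obtain ⟨g, hg, k, hk⟩ := h₂
  refine ⟨e * f + (1 - e) * g, ?_, max m k, ?_⟩
  · rw [IsIdempotentElem, corner_sum_mul he hc, hf.eq, hg.eq]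
  · have hsplit : a - (e * f + (1 - e) * g) = e * (e * a - f) + (1 - e) * ((1 - e) * a - g) := by
      rw [mul_sub, mul_sub, ← mul_assoc, ← mul_assoc, he.eq, he.one_sub.eq]
      noncomm_ring
    rw [hsplit, corner_sum_pow he hc, pow_eq_zero_of_le (le_max_left m k) hm,
      pow_eq_zero_of_le (le_max_right m k) hk, mul_zero, mul_zero, add_zero]

end Central

end IsIdempotentElem

theorem IsUniquelyNilClean.isNilClean {a : R} (h : IsUniquelyNilClean a) : IsNilClean a :=
  h.exists

theorem IsNilClean.isUniquelyNilClean
    (hc : ∀ e : R, IsIdempotentElem e → ∀ r, Commute e r) {a : R} (h : IsNilClean a) :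
    IsUniquelyNilClean a := by
  obtain ⟨e, he, hn⟩ := h
  refine ⟨e, ⟨he, hn⟩, fun f ⟨hf, hfn⟩ => ?_⟩
  have hcomm : Commute (a - e) (a - f) :=
    ((Commute.refl a).sub_right (hc f hf a).symm).sub_left (hc e he (a - f))
  refine eq_of_isNilpotent_sub_of_isIdempotentElem_of_commute hf he ?_ (hc f hf e)
  simpa using hcomm.isNilpotent_sub hn hfn

namespace IsGUNC

theorem mul_mul_one_sub_eq_zero (hG : IsGUNC R) {e : R} (he : IsIdempotentElem e) (r : R) :
    e * r * (1 - e) = 0 := by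
  by_cases he1 : e = 1
  · rw [he1, sub_self, mul_zero]
  have hsame := (hG e fun hu => he1 ((IsIdempotentElem.iff_eq_one_of_isUnit hu).mp he)).unique
    (y₁ := e) (y₂ := e + e * r * (1 - e)) ⟨he, by simp⟩
    ⟨he.add_mul_mul_one_sub r, by simpa using IsNilpotent.neg ⟨2, he.mul_mul_one_sub_sq r⟩⟩
  simpa using hsame

theorem commute_of_isIdempotentElem (hG : IsGUNC R) {e : R} (he : IsIdempotentElem e) (r : R) :
    Commute e r := by
  have h₁ := hG.mul_mul_one_sub_eq_zero he r
  have h₂ := hG.mul_mul_one_sub_eq_zero he.one_sub r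
  rw [sub_sub_cancel, sub_mul, one_mul, sub_mul, sub_eq_zero] at h₂
  rw [mul_sub, mul_one, sub_eq_zero] at h₁
  exact h₁.trans h₂.symm

theorem isUNC_of_isIdempotentElem (hG : IsGUNC R) {e : R} (he : IsIdempotentElem e)
    (he0 : e ≠ 0) (he1 : e ≠ 1) : IsUNC R := by
  have hc : ∀ f : R, IsIdempotentElem f → ∀ r, Commute f r :=
    fun f hf => hG.commute_of_isIdempotentElem hf
  intro a
  refine IsNilClean.isUniquelyNilClean hc ?_
  by_cases ha : IsUnit a
  · have he1' : 1 - e ≠ 1 := fun h => he0 (sub_eq_self.mp h)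
    exact he.isNilClean_of_isNilClean_mul (hc e he) (hG _ (he.not_isUnit_mul he1 a)).isNilClean
      (hG _ (he.one_sub.not_isUnit_mul he1' a)).isNilClean
  · exact (hG a ha).isNilClean

end IsGUNC

theorem isUniquelyNilClean_iff_isNilpotent (hid : ∀ e : R, IsIdempotentElem e → e = 0 ∨ e = 1)
    {a : R} (ha : ¬ IsUnit a) : IsUniquelyNilClean a ↔ IsNilpotent a := by
  have hzero : ∀ e, IsIdempotentElem e → IsNilpotent (a - e) → e = 0 := by
    intro e he hn
    refine (hid e he).resolve_right fun he1 => ha ?_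
    simpa [he1] using hn.isUnit_add_one
  constructor
  · rintro ⟨e, ⟨he, hn⟩, -⟩
    simpa [hzero e he hn] using hn
  · intro hn
    exact ⟨0, ⟨.zero, by simpa using hn⟩, fun e ⟨he, hen⟩ => hzero e he hen⟩

theorem isUNC_of_subsingleton [Subsingleton R] : IsUNC R :=
  fun _ => ⟨0, ⟨.zero, 1, Subsingleton.elim _ _⟩, fun _ _ => Subsingleton.elim _ _⟩

theorem not_isUnit_of_mem_jacobson_bot [Nontrivial R] {a : R}
    (ha : a ∈ (⊥ : TwoSidedIdeal R).jacobson) : ¬ IsUnit a := by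
  intro hu
  have htop : (TwoSidedIdeal.asIdeal (⊥ : TwoSidedIdeal R)).jacobson = ⊤ := by
    rw [← TwoSidedIdeal.asIdeal_jacobson]
    exact Ideal.eq_top_of_isUnit_mem _ (TwoSidedIdeal.mem_asIdeal.mpr ha) hu
  have hone : (1 : R) ∈ TwoSidedIdeal.asIdeal (⊥ : TwoSidedIdeal R) := by
    rw [Ideal.jacobson_eq_top_iff.mp htop]
    exact Submodule.mem_top
  rw [TwoSidedIdeal.mem_asIdeal, TwoSidedIdeal.mem_bot] at hone
  exact one_ne_zero hone

theorem IsLocalRing.of_forall_not_isUnit_isNilpotent [Nontrivial R]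
    (h : ∀ a : R, ¬ IsUnit a → IsNilpotent a) : IsLocalRing R :=
  .of_isUnit_or_isUnit_one_sub_self fun a =>
    or_iff_not_imp_left.mpr fun ha => (h a ha).isUnit_one_sub

namespace IsLocalRing

variable [IsLocalRing R]

theorem eq_zero_or_eq_one_of_isIdempotentElem {e : R} (he : IsIdempotentElem e) :
    e = 0 ∨ e = 1 := by
  rcases isUnit_or_isUnit_of_add_one (add_sub_cancel e 1) with h | h
  · exact Or.inr ((IsIdempotentElem.iff_eq_one_of_isUnit h).mp he)
  · exact Or.inl (sub_eq_self.mp ((IsIdempotentElem.iff_eq_one_of_isUnit h).mp he.one_sub))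

theorem isUnit_of_mul_eq_one {a t : R} (h : t * a = 1) : IsUnit a := by
  rcases isUnit_or_isUnit_of_add_one (add_sub_cancel (a * t) 1) with ⟨u, hu⟩ | h'
  · have hright : a * (t * ↑u⁻¹) = 1 := by rw [← mul_assoc, ← hu, u.mul_inv]
    rw [← left_inv_eq_right_inv h hright] at hright
    exact ⟨⟨a, t, hright, h⟩, rfl⟩
  · have ha : (1 - a * t) * a = 0 := by rw [sub_mul, mul_assoc, h, one_mul, mul_one, sub_self]
    rw [h'.mul_right_eq_zero] at ha
    exact absurd (h.symm.trans (by rw [ha, mul_zero])) one_ne_zero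

theorem mem_jacobson_bot_of_not_isUnit {a : R} (ha : ¬ IsUnit a) :
    a ∈ (⊥ : TwoSidedIdeal R).jacobson := by
  rw [TwoSidedIdeal.mem_jacobson_iff]
  intro y
  have hya : ¬ IsUnit (y * a) := fun ⟨u, hu⟩ =>
    ha (isUnit_of_mul_eq_one (t := ↑u⁻¹ * y) (by rw [mul_assoc, ← hu, u.inv_mul]))
  obtain ⟨u, hu⟩ :=
    (isUnit_or_isUnit_of_add_one (a := y * a + 1) (b := -(y * a)) (by abel)).resolve_right
      fun h => hya (by simpa using h.neg)
  refine ⟨↑u⁻¹, ?_⟩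
  rw [TwoSidedIdeal.mem_bot, mul_assoc, ← mul_add_one, ← hu, u.inv_mul, sub_self]

end IsLocalRing

end NilClean

theorem gunc_iff_local_or_unc {R : Type*} [Ring R] :
    IsGUNC R ↔
      (IsLocalRing R ∧ ∀ a ∈ (⊥ : TwoSidedIdeal R).jacobson, IsNilpotent a) ∨
        IsUNC R := by
  constructor
  · intro hG
    cases subsingleton_or_nontrivial R
    · exact Or.inr isUNC_of_subsingleton
    by_cases hid : ∀ e : R, IsIdempotentElem e → e = 0 ∨ e = 1
    · have hnil : ∀ a : R, ¬ IsUnit a → IsNilpotent a :=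
        fun a ha => (isUniquelyNilClean_iff_isNilpotent hid ha).mp (hG a ha)
      exact Or.inl ⟨.of_forall_not_isUnit_isNilpotent hnil,
        fun a ha => hnil a (not_isUnit_of_mem_jacobson_bot ha)⟩
    · obtain ⟨e, he, he0, he1⟩ : ∃ e : R, IsIdempotentElem e ∧ e ≠ 0 ∧ e ≠ 1 := by
        simpa [not_or] using hid
      exact Or.inr (hG.isUNC_of_isIdempotentElem he he0 he1)
  · rintro (⟨_, hnil⟩ | hU) a ha
    · exact (isUniquelyNilClean_iff_isNilpotent
        (fun _ => IsLocalRing.eq_zero_or_eq_one_of_isIdempotentElem) ha).mpr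
        (hnil a (IsLocalRing.mem_jacobson_bot_of_not_isUnit ha))
    · exact hU a
end

section
/- If R is a GUNC ring, then the Jacobson radical of R is nil. -/
lemma exists_left_inv_of_mem_jacobson {R : Type*} [Ring R] {x : R}
    (hx : x ∈ (⊥ : TwoSidedIdeal R).jacobson) : ∃ z : R, z * (1 - x) = 1 := by
  obtain ⟨z, hz⟩ := TwoSidedIdeal.mem_jacobson_iff.1 hx (-1)
  rw [TwoSidedIdeal.mem_bot] at hz
  rw [sub_eq_zero] at hz
  refine ⟨z, ?_⟩
  calc z * (1 - x) = z * (-1) * x + z := by noncomm_ring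
  _ = 1 := hz

lemma isUnit_one_sub_of_mem_jacobson {R : Type*} [Ring R] {x : R}
    (hx : x ∈ (⊥ : TwoSidedIdeal R).jacobson) : IsUnit (1 - x) := by
  obtain ⟨z, hz⟩ := exists_left_inv_of_mem_jacobson hx
  have hzx : -(z * x) ∈ (⊥ : TwoSidedIdeal R).jacobson :=
    TwoSidedIdeal.neg_mem _ (TwoSidedIdeal.mul_mem_left _ _ _ hx)
  obtain ⟨w, hw⟩ := exists_left_inv_of_mem_jacobson hzx
  have hwz : w * z = 1 := by
    have h3 : 1 - -(z * x) = z := by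
      calc 1 - -(z * x) = 1 + z * x := by rw [sub_neg_eq_add]
      _ = z * (1 - x) + z * x := by rw [hz]
      _ = z := by noncomm_ring
    rwa [h3] at hw
  have hw' : w = 1 - x := by
    calc w = w * (z * (1 - x)) := by rw [hz, mul_one]
    _ = (w * z) * (1 - x) := by rw [mul_assoc]
    _ = 1 - x := by rw [hwz, one_mul]
  have hfinal : (1 - x) * z = 1 := by rw [← hw']; exact hwz
  exact ⟨⟨1 - x, z, hfinal, hz⟩, rfl⟩

theorem gunc_jacobson_nil {R : Type*} [Ring R] (h : IsGUNC R) :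
    ∀ a ∈ (⊥ : TwoSidedIdeal R).jacobson, IsNilpotent a := by
  intro a ha
  set J := (⊥ : TwoSidedIdeal R).jacobson with hJ
  by_cases hu : IsUnit a
  ·
    obtain ⟨u, hu'⟩ := hu
    have h1 : (1 : R) ∈ J := by
      have := TwoSidedIdeal.mul_mem_left J (↑u⁻¹) a ha
      rwa [← hu', Units.inv_mul] at this
    have h0 : IsUnit (0 : R) := by
      have := isUnit_one_sub_of_mem_jacobson (x := (1 : R)) h1
      simpa using this
    have h01 : (0 : R) = 1 := isUnit_zero_iff.1 h0
    have : Subsingleton R := subsingleton_of_zero_eq_one h01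
    exact ⟨1, Subsingleton.elim _ _⟩
  · obtain ⟨e, ⟨he, hn⟩, _⟩ := h a hu
    -- pass to quotient by J
    set c := J.ringCon with hc
    let f : R →+* c.Quotient := c.mk'
    have hfa : f a = 0 := by
      have : c a 0 := (TwoSidedIdeal.mem_iff _ _).1 ha
      exact (Con.eq _).2 this
    have hfe_idem : IsIdempotentElem (f e) := by
      unfold IsIdempotentElem
      rw [← map_mul, he]
    have hfe_nil : IsNilpotent (f e) := by
      have h1 : IsNilpotent (f (a - e)) := hn.map f
      have : f (a - e) = -(f e) := by rw [map_sub, hfa, zero_sub]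
      rw [this] at h1
      simpa using h1.neg
    have hfe : f e = 0 := hfe_idem.eq_zero_of_isNilpotent hfe_nil
    have heJ : e ∈ J := by
      have : c e 0 := (Con.eq _).1 hfe
      exact (TwoSidedIdeal.mem_iff _ _).2 this
    have hunit : IsUnit (1 - e) := isUnit_one_sub_of_mem_jacobson heJ
    have he0 : e = 0 := by
      have h2 : e * (1 - e) = 0 * (1 - e) := by
        rw [mul_sub, mul_one, he, sub_self, zero_mul]
      exact hunit.mul_right_cancel h2
    rw [he0, sub_zero] at hn
    exact hn
end

section
/- If R is a GUNC ring, then J(R) = Nil(R), i.e., the Jacobson radical equals the set of nilpotent elements. -/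
section Aux

variable {R : Type*} [Ring R]

/-- In a GUNC ring, every idempotent different from 1 is central. -/
lemma gunc_central (h : IsGUNC R) {e : R} (he : IsIdempotentElem e) (hne : e ≠ 1)
    (x : R) : e * x = x * e := by
  have hnu : ¬ IsUnit e := by
    intro hu
    exact hne (hu.mul_left_cancel (by rw [mul_one]; exact he))
  obtain ⟨c, -, huniq⟩ := h e hnu
  have base : e = c := huniq e ⟨he, by simp⟩
  have key : ∀ u : R, u * u = 0 → e * u + u * e = u → u = 0 := by
    intro u hu2 hsum
    have hidem : IsIdempotentElem (e + u) := by
      show (e + u) * (e + u) = e + u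
      have hexp : (e + u) * (e + u) = e * e + (e * u + u * e) + u * u := by noncomm_ring
      rw [hexp, he, hsum, hu2, add_zero]
    have hnil : IsNilpotent (e - (e + u)) := by
      refine ⟨2, ?_⟩
      have h1 : e - (e + u) = -u := by noncomm_ring
      have h2 : (-u) ^ 2 = u * u := by noncomm_ring
      rw [h1, h2, hu2]
    have h3 : e + u = c := huniq _ ⟨hidem, hnil⟩
    have h4 : e + u = e := h3.trans base.symm
    exact add_eq_left.mp h4
  have h0 : (1 - e) * e = 0 := by rw [sub_mul, one_mul, he, sub_self]
  have h1 : e * x * (1 - e) = 0 := by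
    apply key
    · have : e * x * (1 - e) * (e * x * (1 - e)) = e * x * ((1 - e) * e) * (x * (1 - e)) := by
        noncomm_ring
      rw [this, h0, mul_zero, zero_mul]
    · have ha : e * (e * x * (1 - e)) = e * e * x * (1 - e) := by noncomm_ring
      have hb : e * x * (1 - e) * e = e * x * ((1 - e) * e) := by noncomm_ring
      rw [ha, hb, he, h0, mul_zero, add_zero]
  have h2 : (1 - e) * x * e = 0 := by
    apply key
    · have : (1 - e) * x * e * ((1 - e) * x * e) = (1 - e) * x * (e * (1 - e)) * (x * e) := by
        noncomm_ring
      have h0' : e * (1 - e) = 0 := by rw [mul_sub, mul_one, he, sub_self]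
      rw [this, h0', mul_zero, zero_mul]
    · have ha : e * ((1 - e) * x * e) = (e * (1 - e)) * x * e := by noncomm_ring
      have hb : (1 - e) * x * e * e = (1 - e) * x * (e * e) := by noncomm_ring
      have h0' : e * (1 - e) = 0 := by rw [mul_sub, mul_one, he, sub_self]
      rw [ha, hb, he, h0', zero_mul, zero_mul, zero_add]
  have hx1 : e * x - e * x * e = 0 := by
    have : e * x * (1 - e) = e * x - e * x * e := by noncomm_ring
    rw [← this, h1]
  have hx2 : x * e - e * x * e = 0 := by
    have : (1 - e) * x * e = x * e - e * x * e := by noncomm_ring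
    rw [← this, h2]
  exact (sub_eq_zero.mp hx1).trans (sub_eq_zero.mp hx2).symm

/-- In a GUNC ring, `1 - x * a` is a unit whenever `a` is nilpotent. -/
lemma gunc_isUnit_one_sub (h : IsGUNC R) {a : R} (ha : IsNilpotent a) (x : R) :
    IsUnit (1 - x * a) := by
  by_contra hnu
  obtain ⟨e, ⟨he, hn⟩, huniq⟩ := h _ hnu
  by_cases he1 : e = 1
  · subst he1
    apply hnu
    have heq : (1 : R) + (1 - x * a - 1) = 1 - x * a := by noncomm_ring
    exact heq ▸ hn.isUnit_one_add
  · have hc : ∀ y, e * y = y * e := gunc_central h he he1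
    obtain ⟨m, hm⟩ := hn
    obtain ⟨k, hk⟩ := ha
    set f : R := 1 - e with hf
    have hff : f * f = f := he.one_sub
    have hcf : ∀ y : R, f * y = y * f := by
      intro y
      rw [hf, sub_mul, one_mul, mul_sub, mul_one, hc]
    have hfe : f * e = 0 := by rw [hf, sub_mul, one_mul, he, sub_self]
    have hun : IsUnit (1 - (1 - x * a - e)) := IsNilpotent.isUnit_one_sub ⟨m, hm⟩
    obtain ⟨w, hw⟩ := hun
    have hfxa : f * (x * a) = f * (1 - (1 - x * a - e)) := by
      have hexp : f * (1 - (1 - x * a - e)) = f * (x * a) + f * e := by noncomm_ring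
      rw [hexp, hfe, add_zero]
    set b : R := a * f with hb
    have hfb : f * b = b := by
      rw [hb, ← mul_assoc, hcf a, mul_assoc, hff]
    have hbk : b ^ k = 0 := by
      have hcm : Commute a f := (hcf a).symm
      rw [hb, hcm.mul_pow, hk, zero_mul]
    set z : R := (↑w⁻¹ : R) * (f * x) with hz
    have hzb : z * b = f := by
      have h3 : z * b = (↑w⁻¹ : R) * (f * (x * a) * f) := by
        rw [hz, hb]; noncomm_ring
      rw [h3, hfxa, ← hw, mul_assoc, hcf, ← mul_assoc, ← mul_assoc, w.inv_mul, one_mul, hff]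
    have hrec : ∀ j : ℕ, b = z ^ j * b ^ (j + 1) := by
      intro j
      induction j with
      | zero => simp
      | succ i ih =>
        have hb2 : b = z * (b * b) := by
          conv_lhs => rw [← hfb, ← hzb]
          rw [mul_assoc]
        calc b = z ^ i * b ^ (i + 1) := ih
          _ = z ^ i * (b * b ^ i) := by rw [pow_succ']
          _ = z ^ i * ((z * (b * b)) * b ^ i) := by rw [← hb2]
          _ = z ^ (i + 1) * b ^ (i + 2) := by
              rw [pow_succ]
              have : b ^ (i + 2) = b * (b * b ^ i) := by
                rw [pow_succ', pow_succ']
              rw [this]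
              noncomm_ring
    have hb0 : b = 0 := by
      have h6 := hrec k
      rw [pow_succ, hbk, zero_mul, mul_zero] at h6
      exact h6
    have hf0 : f = 0 := by rw [← hzb, hb0, mul_zero]
    apply he1
    rw [hf] at hf0
    exact (sub_eq_zero.mp hf0).symm

end Aux

theorem gunc_jacobson_eq_nil {R : Type*} [Ring R] (h : IsGUNC R) :
    ∀ a : R, a ∈ (⊥ : TwoSidedIdeal R).jacobson ↔ IsNilpotent a := by
  intro a
  constructor
  · intro hmem
    rw [TwoSidedIdeal.mem_jacobson_iff] at hmem
    simp only [TwoSidedIdeal.mem_bot] at hmem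
    have hunit : ∀ y : R, IsUnit (1 + y * a) := by
      intro y
      obtain ⟨z, hz⟩ := hmem y
      have hz1 : z * (1 + y * a) = 1 := by
        have hexp : z * (1 + y * a) = z * y * a + z := by noncomm_ring
        rw [hexp]
        exact sub_eq_zero.mp hz
      obtain ⟨z₂, hz2⟩ := hmem (-(z * y))
      have hz2' : z₂ * z = 1 := by
        have hzz : z = 1 + -(z * y) * a := by
          have h7 : z + z * (y * a) = 1 := by
            have : z * (1 + y * a) = z + z * (y * a) := by noncomm_ring
            rw [← this]; exact hz1
          have h8 : (1 : R) + -(z * y) * a = 1 - z * (y * a) := by noncomm_ring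
          rw [h8]
          exact eq_sub_of_add_eq h7
        have h4 : z₂ * (1 + -(z * y) * a) = 1 := by
          have hexp : z₂ * (1 + -(z * y) * a) = z₂ * -(z * y) * a + z₂ := by noncomm_ring
          rw [hexp]
          exact sub_eq_zero.mp hz2
        rw [← hzz] at h4
        exact h4
      have hmain : (1 + y * a) * z = 1 := by
        have h9 : z₂ = 1 + y * a := by
          calc z₂ = z₂ * (z * (1 + y * a)) := by rw [hz1, mul_one]
            _ = (z₂ * z) * (1 + y * a) := by rw [mul_assoc]
            _ = 1 + y * a := by rw [hz2', one_mul]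
        rw [← h9]
        exact hz2'
      exact ⟨⟨1 + y * a, z, hmain, hz1⟩, rfl⟩
    by_cases hu : IsUnit a
    · obtain ⟨w, hw⟩ := hu
      have h0 : IsUnit (0 : R) := by
        have h10 := hunit (-(↑w⁻¹ : R))
        have heq : (1 : R) + (-(↑w⁻¹ : R)) * a = 0 := by
          rw [neg_mul, ← hw, w.inv_mul, add_neg_cancel]
        rwa [heq] at h10
      have h01 : (0 : R) = 1 := isUnit_zero_iff.mp h0
      exact ⟨1, by rw [pow_one, ← mul_one a, ← h01, mul_zero]⟩
    · obtain ⟨e, ⟨he, hn⟩, huniq⟩ := h a hu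
      by_cases he1 : e = 1
      · exfalso
        apply hu
        rw [he1] at hn
        have heq : (1 : R) + (a - 1) = a := by noncomm_ring
        exact heq ▸ hn.isUnit_one_add
      · have hc := gunc_central h he he1
        obtain ⟨m, hm⟩ := hn
        have hua : IsUnit (1 - a) := by
          have h11 := hunit (-1)
          have heq : (1 : R) + (-1) * a = 1 - a := by noncomm_ring
          rwa [heq] at h11
        obtain ⟨v, hv⟩ := hua
        have key : e * (1 - a) = e * -(a - e) := by
          have h12 : e * -(a - e) = e * e - e * a := by noncomm_ring
          rw [h12, he]
          noncomm_ring
        set t : R := -(a - e) * (↑v⁻¹ : R) with ht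
        have het : e = e * t := by
          have h5 : e * ↑v = e * -(a - e) := by rw [hv]; exact key
          calc e = e * (↑v * ↑v⁻¹) := by rw [v.mul_inv, mul_one]
            _ = (e * ↑v) * ↑v⁻¹ := by rw [mul_assoc]
            _ = (e * -(a - e)) * ↑v⁻¹ := by rw [h5]
            _ = e * t := by rw [ht, mul_assoc]
        have hcomm_na : Commute (a - e) a :=
          ((Commute.refl a).sub_left ((hc a) : Commute e a))
        have hcomm_nv : Commute (a - e) (↑v : R) := by
          rw [hv]
          exact (Commute.one_right (a - e)).sub_right hcomm_na
        have hcomm_ni : Commute (a - e) (↑v⁻¹ : R) := hcomm_nv.units_inv_right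
        have htm : t ^ m = 0 := by
          have hcn : Commute (-(a - e)) (↑v⁻¹ : R) := hcomm_ni.neg_left
          rw [ht, hcn.mul_pow]
          have : (-(a - e)) ^ m = 0 := by
            rw [neg_pow, hm, mul_zero]
          rw [this, zero_mul]
        have hall : ∀ j : ℕ, e = e * t ^ j := by
          intro j
          induction j with
          | zero => simp
          | succ i ih =>
            calc e = e * t ^ i := ih
              _ = (e * t) * t ^ i := by rw [← het]
              _ = e * t ^ (i + 1) := by rw [mul_assoc, ← pow_succ']
        have he0 : e = 0 := by
          have h13 := hall m
          rw [htm, mul_zero] at h13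
          exact h13
        rw [he0, sub_zero] at hm
        exact ⟨m, hm⟩
  · intro ha
    rw [TwoSidedIdeal.mem_jacobson_iff]
    intro y
    obtain ⟨w, hw⟩ := gunc_isUnit_one_sub h ha (-y)
    refine ⟨(↑w⁻¹ : R), ?_⟩
    rw [TwoSidedIdeal.mem_bot]
    have h1 : (↑w⁻¹ : R) * (1 - (-y) * a) = 1 := by
      rw [← hw, w.inv_mul]
    have h2 : (↑w⁻¹ : R) * y * a + (↑w⁻¹ : R) = (↑w⁻¹ : R) * (1 - (-y) * a) := by
      noncomm_ring
    rw [sub_eq_zero, h2, h1]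
end

section
/- A ring R is uniquely nil-clean (UNC) if and only if R is both GUNC and a UU ring. -/
/-- A ring is UU if every unit is of the form 1 + nilpotent. -/
def IsUU (R : Type*) [Ring R] : Prop :=
  ∀ a : R, IsUnit a → ∃ q : R, IsNilpotent q ∧ a = 1 + q

/-- An idempotent that is itself uniquely nil-clean is central. -/
lemma central_of_unc {R : Type*} [Ring R] {e : R} (he : IsIdempotentElem e)
    (h : IsUniquelyNilClean e) (x : R) : e * x = x * e := by
  obtain ⟨c, -, hu⟩ := h
  have hce : c = e := (hu e ⟨he, by simp⟩).symm
  have hee : e * e = e := he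
  -- left: f = e + q with q = e*x - e*x*e
  have left : e * x = e * x * e := by
    set q : R := e * x - e * x * e with hq
    have heq : e * q = q := by simp only [hq, mul_sub, ← mul_assoc, hee]
    have hqe : q * e = 0 := by simp only [hq, sub_mul, mul_assoc, hee, sub_self]
    have hqq : q * q = 0 := by
      calc q * q = q * (e * x) - q * (e * x * e) := by rw [← mul_sub]
      _ = 0 := by
        rw [← mul_assoc q e x, hqe, zero_mul, ← mul_assoc, ← mul_assoc, hqe, zero_mul,
          zero_mul, sub_self]
    have hfidem : IsIdempotentElem (e + q) := by
      show (e + q) * (e + q) = e + q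
      rw [add_mul, mul_add, mul_add, hee, heq, hqe, hqq, add_zero, add_zero]
    have hfn : IsNilpotent (e - (e + q)) := by
      refine ⟨2, ?_⟩
      rw [sub_add_eq_sub_sub, sub_self, zero_sub, pow_two, neg_mul_neg, hqq]
    have h1 : e + q = e := by rw [hu (e + q) ⟨hfidem, hfn⟩, hce]
    have hq0 : q = 0 := by
      have := congrArg (· - e) h1
      simpa using this
    exact sub_eq_zero.mp hq0
  -- right: g = e + p with p = x*e - e*x*e
  have right : x * e = e * x * e := by
    set p : R := x * e - e * x * e with hp
    have hpe : p * e = p := by simp only [hp, sub_mul, mul_assoc, hee]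
    have hep : e * p = 0 := by
      simp only [hp, mul_sub, ← mul_assoc, hee, sub_self]
    have hpp : p * p = 0 := by
      nth_rewrite 1 [← hpe]
      rw [mul_assoc, hep, mul_zero]
    have hfidem : IsIdempotentElem (e + p) := by
      show (e + p) * (e + p) = e + p
      rw [add_mul, mul_add, mul_add, hee, hep, hpe, hpp]
      abel
    have hfn : IsNilpotent (e - (e + p)) := by
      refine ⟨2, ?_⟩
      rw [sub_add_eq_sub_sub, sub_self, zero_sub, pow_two, neg_mul_neg, hpp]
    have h1 : e + p = e := by rw [hu (e + p) ⟨hfidem, hfn⟩, hce]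
    have hp0 : p = 0 := by
      have := congrArg (· - e) h1
      simpa using this
    exact sub_eq_zero.mp hp0
  rw [left, right]

/-- A central idempotent differing from a unit by a nilpotent is 1. -/
lemma eq_one_of_central_idem {R : Type*} [Ring R] {a f : R} (ha : IsUnit a)
    (hf : IsIdempotentElem f) (hc : ∀ x, f * x = x * f) (hn : IsNilpotent (a - f)) :
    f = 1 := by
  obtain ⟨k, hk⟩ := hn
  have hff : f * f = f := hf
  -- a * (1 - f) = (a - f) * (1 - f)
  have key : a * (1 - f) = (a - f) * (1 - f) := by
    have : (a - f) * (1 - f) = a * (1 - f) - (f - f * f) := by noncomm_ring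
    rw [this, hff, sub_self, sub_zero]
  have hfa : Commute f a := hc a
  have hcomm1 : Commute a (1 - f) := (Commute.one_right a).sub_right hfa.symm
  have hcomm2 : Commute (a - f) (1 - f) :=
    hcomm1.sub_left ((Commute.one_right f).sub_right (Commute.refl f))
  have hidem1f : IsIdempotentElem (1 - f) := hf.one_sub
  have hpow1f : (1 - f) ^ (k + 1) = 1 - f := hidem1f.pow_succ_eq k
  have h0 : a ^ (k + 1) * (1 - f) = 0 := by
    have e1 : (a * (1 - f)) ^ (k + 1) = a ^ (k + 1) * (1 - f) := by
      rw [hcomm1.mul_pow, hpow1f]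
    have e2 : ((a - f) * (1 - f)) ^ (k + 1) = 0 := by
      rw [hcomm2.mul_pow, pow_succ, hk, zero_mul, zero_mul]
    rw [← e1, key, e2]
  have hap : IsUnit (a ^ (k + 1)) := ha.pow _
  have h1f : (1 : R) - f = 0 := hap.mul_left_cancel (by rw [h0, mul_zero])
  have := sub_eq_zero.mp h1f
  exact this.symm

theorem unc_iff_gunc_and_uu {R : Type*} [Ring R] :
    IsUNC R ↔ IsGUNC R ∧ IsUU R := by
  constructor
  · intro h
    refine ⟨fun a _ => h a, fun a ha => ?_⟩
    obtain ⟨e, ⟨he, hn⟩, -⟩ := h a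
    have hc : ∀ x, e * x = x * e := central_of_unc he (h e)
    have he1 : e = 1 := eq_one_of_central_idem ha he hc hn
    exact ⟨a - 1, by rw [← he1]; exact hn, by abel⟩
  · rintro ⟨hg, hu⟩ a
    by_cases ha : IsUnit a
    · obtain ⟨q, hq, haq⟩ := hu a ha
      refine ⟨1, ⟨by simp [IsIdempotentElem], by simpa [haq] using hq⟩, ?_⟩
      rintro f ⟨hf, hfn⟩
      by_cases hfu : IsUnit f
      · -- idempotent unit is 1
        exact hfu.mul_left_cancel (by rw [hf.eq, mul_one])
      · have hc : ∀ x, f * x = x * f := central_of_unc hf (hg f hfu)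
        exact eq_one_of_central_idem ha hf hc hfn
    · exact hg a ha
end

section
/- If R is a GSNC ring, then the Jacobson radical J(R) is nil. -/
def IsStronglyNilClean {R : Type*} [Ring R] (a : R) : Prop :=
  ∃ e q : R, IsIdempotentElem e ∧ IsNilpotent q ∧ a = e + q ∧ e * q = q * e

/-- A ring is GSNC if every non-invertible element is strongly nil-clean. -/
def IsGSNC (R : Type*) [Ring R] : Prop :=
  ∀ a : R, ¬ IsUnit a → IsStronglyNilClean a

theorem gsnc_jacobson_nil {R : Type*} [Ring R] (h : IsGSNC R) :
    ∀ a ∈ (⊥ : TwoSidedIdeal R).jacobson, IsNilpotent a := by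
  intro a ha
  by_cases hu : IsUnit a
  · -- then 1 = 0, so a = 0
    obtain ⟨u, rfl⟩ := hu
    rw [TwoSidedIdeal.mem_jacobson_iff] at ha
    obtain ⟨z, hz⟩ := ha (-(u⁻¹ : Rˣ))
    rw [TwoSidedIdeal.mem_bot] at hz
    have key : z * -(↑u⁻¹ : R) * ↑u = -z := by
      rw [mul_neg, neg_mul, mul_assoc, Units.inv_mul, mul_one]
    rw [key] at hz
    rw [neg_add_cancel, zero_sub, neg_eq_zero] at hz
    have h1 : (1 : R) = 0 := hz
    exact ⟨1, by rw [pow_one, ← mul_one (u : R), h1, mul_zero]⟩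
  · obtain ⟨e, q, he, ⟨n, hn⟩, haeq, hcomm⟩ := h a hu
    -- a commutes with q
    have hc0 : Commute a q := by
      show a * q = q * a
      rw [haeq, add_mul, mul_add, hcomm]
    have hc : Commute a (-q) := hc0.neg_right
    -- e ∈ jacobson ⊥
    have heJ : e ∈ (⊥ : TwoSidedIdeal R).jacobson := by
      have hee : e = (a + -q) ^ n.succ := by
        rw [haeq, add_assoc, add_neg_cancel, add_zero]
        exact (he.pow_succ_eq n).symm
      rw [hee, hc.add_pow]
      apply sum_mem
      intro k hk
      rcases Nat.eq_zero_or_pos k with hk0 | hk1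
      · subst hk0
        have hqn : q ^ (n + 1) = 0 := by rw [pow_succ, hn, zero_mul]
        have hq0 : (-q) ^ (n + 1) = 0 := by rw [neg_pow, hqn, mul_zero]
        simp [hq0]
      · obtain ⟨m, rfl⟩ := Nat.exists_eq_succ_of_ne_zero hk1.ne'
        have heq : a ^ (m + 1) * (-q) ^ (n.succ - (m + 1)) * ((n.succ).choose (m + 1) : R)
            = a ^ m * (a * ((-q) ^ (n.succ - (m + 1)) * ((n.succ).choose (m + 1) : R))) := by
          simp only [pow_succ, mul_assoc]
        rw [heq]
        exact TwoSidedIdeal.mul_mem_left _ _ _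
          (TwoSidedIdeal.mul_mem_right _ _ _ ha)
    -- e = 0
    have he0 : e = 0 := by
      rw [TwoSidedIdeal.mem_jacobson_iff] at heJ
      obtain ⟨z, hz⟩ := heJ (-1)
      rw [TwoSidedIdeal.mem_bot] at hz
      rw [mul_neg_one, neg_mul] at hz
      have hz1 : z - z * e = 1 := by
        have h2 := eq_of_sub_eq_zero hz
        rwa [neg_add_eq_sub] at h2
      have h3 : e = (z - z * e) * e := by rw [hz1, one_mul]
      rw [sub_mul, mul_assoc, he] at h3
      simpa using h3
    exact ⟨n, by rw [haeq, he0, zero_add, hn]⟩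
end
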